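/- arXiv:2403.08052 — 9 statements merged into one kernel-verified Lean document; each statement's English description precedes it below -/
import Mathlib

section
/- Let H be a real Hilbert space, let T, A : H → H be bounded linear operators, and let x₀, x̄₀ ∈ H. Suppose x, x̄ : [0,∞) → H are differentiable functions such that T ẋ(t) = A x(t) and T* ẋ̄(t) = A* x̄(t) for all t ≥ 0, with T x(0) = T x₀ and T* x̄(0) = T* x̄₀. Then for all t ≥ 0, ⟨T* x̄₀, x(t)⟩ = ⟨x̄(t), T x₀⟩. (Theorem 1, intertwining relation between a PIE and its dual PIE.) -/
/-!
Fix `t ≥ 0` and pair the solution with the dual solution run backwards in time: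
`g s = ⟪x̄ (t - s), T (x s)⟫`. Its derivative is `⟪x̄ (t - s), A (x s)⟫ - ⟪A* x̄ (t - s), x s⟫ = 0`,
so `g t = g 0`, and the initial conditions turn the two endpoint values into the two sides
of the identity.
-/

open scoped RealInnerProductSpace
open ContinuousLinearMap Set

theorem eq_of_hasDerivAt_zero_of_mem_Icc {E : Type*} [NormedAddCommGroup E] [NormedSpace ℝ E]
    {f : ℝ → E} {a b : ℝ} (hab : a ≤ b) (hf : ∀ s ∈ Icc a b, HasDerivAt f 0 s) : f b = f a :=
  constant_of_has_deriv_right_zero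
    (fun s hs => (hf s hs).continuousAt.continuousWithinAt)
    (fun s hs => (hf s (mem_Icc_of_Ico hs)).hasDerivWithinAt) b (right_mem_Icc.2 hab)

section Dual

variable {H : Type*} [NormedAddCommGroup H] [InnerProductSpace ℝ H]

theorem hasDerivAt_inner_comp_sub_apply (T : H →L[ℝ] H) {x y : ℝ → H} {x' y' : H} {t s : ℝ}
    (hx : HasDerivAt x x' s) (hy : HasDerivAt y y' (t - s)) :
    HasDerivAt (fun r => ⟪y (t - r), T (x r)⟫) (⟪y (t - s), T x'⟫ - ⟪y', T (x s)⟫) s := by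
  have hy_rev : HasDerivAt (fun r => y (t - r)) (-y') s := by
    simpa [Function.comp_def] using hy.scomp s ((hasDerivAt_id s).const_sub t)
  simpa [sub_eq_add_neg] using hy_rev.inner ℝ (T.hasFDerivAt.comp_hasDerivAt s hx)

variable [CompleteSpace H]

theorem inner_apply_eq_of_apply_eq_of_adjoint_apply_eq {T A : H →L[ℝ] H} {u u' v v' : H}
    (h : T u' = A u) (h' : adjoint T v' = adjoint A v) : ⟪v, T u'⟫ = ⟪v', T u⟫ := by
  rw [h, ← adjoint_inner_left, ← h', adjoint_inner_left]

end Dual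

/-- **Theorem 1 (intertwining relation between a PIE and its dual PIE).**
If `x` solves the PIE `Σ(T,A)` with `T x(0) = T x₀` and `x̄` solves the dual PIE
`Σ(T*,A*)` with `T* x̄(0) = T* x̄₀`, then `⟪T* x̄₀, x t⟫ = ⟪x̄ t, T x₀⟫` for all `t ≥ 0`. -/
theorem pie_dual_intertwining
    {H : Type*} [NormedAddCommGroup H] [InnerProductSpace ℝ H] [CompleteSpace H]
    (T A : H →L[ℝ] H) (x₀ xb₀ : H)
    (x xb x' xb' : ℝ → H)
    (hx : ∀ t : ℝ, 0 ≤ t → HasDerivAt x (x' t) t)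
    (hxb : ∀ t : ℝ, 0 ≤ t → HasDerivAt xb (xb' t) t)
    (hxeq : ∀ t : ℝ, 0 ≤ t → T (x' t) = A (x t))
    (hxbeq : ∀ t : ℝ, 0 ≤ t →
      ContinuousLinearMap.adjoint T (xb' t) = ContinuousLinearMap.adjoint A (xb t))
    (hx0 : T (x 0) = T x₀)
    (hxb0 : ContinuousLinearMap.adjoint T (xb 0) = ContinuousLinearMap.adjoint T xb₀) :
    ∀ t : ℝ, 0 ≤ t →
      ⟪ContinuousLinearMap.adjoint T xb₀, x t⟫ = ⟪xb t, T x₀⟫ := by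
  intro t ht
  have hconst : ⟪xb (t - t), T (x t)⟫ = ⟪xb (t - 0), T (x 0)⟫ := by
    refine eq_of_hasDerivAt_zero_of_mem_Icc (f := fun s => ⟪xb (t - s), T (x s)⟫) ht
      fun s ⟨hs₀, hst⟩ => ?_
    have hts : 0 ≤ t - s := sub_nonneg.2 hst
    have hderiv := hasDerivAt_inner_comp_sub_apply T (hx s hs₀) (hxb (t - s) hts)
    rwa [inner_apply_eq_of_apply_eq_of_adjoint_apply_eq (hxeq s hs₀) (hxbeq _ hts), sub_self]
      at hderiv
  rw [sub_self, sub_zero, hx0, ← adjoint_inner_left, hxb0] at hconst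
  exact hconst
end

section
/- Let H be a real Hilbert space, let T, A : H → H be bounded linear operators, and fix t ≥ 0. Suppose x, x̄ : [0,∞) → H are differentiable with T ẋ(s) = A x(s) and T* ẋ̄(s) = A* x̄(s) for all s ≥ 0. Then the function g : [0,t] → ℝ defined by g(s) = ⟨x̄(t−s), T x(s)⟩ is constant; in particular ⟨x̄(t), T x(0)⟩ = ⟨x̄(0), T x(t)⟩. -/
open scoped RealInnerProductSpace

/-- The key computation underlying Theorem 1: along a primal trajectory `x` of `Σ(T,A)`
and a dual trajectory `x̄` of `Σ(T*,A*)`, the pairing `g(s) = ⟪x̄(t−s), T x(s)⟫` is constant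
on `[0,t]`; in particular `⟪x̄(t), T x(0)⟫ = ⟪x̄(0), T x(t)⟫`. -/
theorem pie_dual_pairing_constant
    {H : Type*} [NormedAddCommGroup H] [InnerProductSpace ℝ H] [CompleteSpace H]
    (T A : H →L[ℝ] H) (t : ℝ) (ht : 0 ≤ t)
    (x xb x' xb' : ℝ → H)
    (hx : ∀ s : ℝ, 0 ≤ s → HasDerivAt x (x' s) s)
    (hxb : ∀ s : ℝ, 0 ≤ s → HasDerivAt xb (xb' s) s)
    (hxeq : ∀ s : ℝ, 0 ≤ s → T (x' s) = A (x s))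
    (hxbeq : ∀ s : ℝ, 0 ≤ s →
      ContinuousLinearMap.adjoint T (xb' s) = ContinuousLinearMap.adjoint A (xb s)) :
    (∀ s₁ ∈ Set.Icc (0 : ℝ) t, ∀ s₂ ∈ Set.Icc (0 : ℝ) t,
        ⟪xb (t - s₁), T (x s₁)⟫ = ⟪xb (t - s₂), T (x s₂)⟫) ∧
      ⟪xb t, T (x 0)⟫ = ⟪xb 0, T (x t)⟫ := by
  set g : ℝ → ℝ := fun s => ⟪xb (t - s), T (x s)⟫ with hg
  have key : ∀ s ∈ Set.Icc (0:ℝ) t, HasDerivAt g 0 s := by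
    intro s hs
    have hs0 : (0:ℝ) ≤ s := hs.1
    have hts : (0:ℝ) ≤ t - s := by linarith [hs.2]
    have h1 : HasDerivAt (fun s => xb (t - s)) ((-1 : ℝ) • xb' (t - s)) s := by
      exact (hxb (t - s) hts).scomp s (((hasDerivAt_id s).const_sub t))
    have h2 : HasDerivAt (fun s => T (x s)) (T (x' s)) s :=
      (T.hasFDerivAt.comp_hasDerivAt s (hx s hs0))
    have h3 := h1.inner ℝ h2
    have hzero : ⟪xb (t - s), T (x' s)⟫ + ⟪(-1 : ℝ) • xb' (t - s), T (x s)⟫ = 0 := by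
      rw [hxeq s hs0, ← ContinuousLinearMap.adjoint_inner_left A,
        ← ContinuousLinearMap.adjoint_inner_left T]
      simp [map_smul, hxbeq (t - s) hts, inner_smul_left]
    exact hzero ▸ h3
  have hcont : ContinuousOn g (Set.Icc 0 t) := fun s hs => (key s hs).continuousAt.continuousWithinAt
  have hconst : ∀ s ∈ Set.Icc (0:ℝ) t, g s = g 0 :=
    constant_of_has_deriv_right_zero hcont
      (fun s hs => (key s ⟨hs.1, hs.2.le⟩).hasDerivWithinAt)
  have main : ∀ s₁ ∈ Set.Icc (0:ℝ) t, ∀ s₂ ∈ Set.Icc (0:ℝ) t, g s₁ = g s₂ := by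
    intro s₁ h₁ s₂ h₂; rw [hconst s₁ h₁, hconst s₂ h₂]
  refine ⟨main, ?_⟩
  have := main 0 ⟨le_refl 0, ht⟩ t ⟨ht, le_refl t⟩
  simpa [g] using this
end

section
/- Let H be a real Hilbert space, T, A : H → H, B : ℝ^q → H and C : H → ℝ^p bounded linear operators, u₀ ∈ ℝ^q, ū₀ ∈ ℝ^p. Suppose x, x̄ : [0,∞) → H are differentiable with T ẋ(t) = A x(t), T* ẋ̄(t) = A* x̄(t) for all t ≥ 0, T x(0) = B u₀, and T* x̄(0) = C* ū₀. Then for every t ≥ 0, ⟨ū₀, C x(t)⟩ = ⟨B* x̄(t), u₀⟩; that is, the primal output z(t) = C x(t) and the dual output z̄(t) = B* x̄(t) satisfy ū₀ᵀ z(t) = z̄(t)ᵀ u₀. -/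
open scoped RealInnerProductSpace

/-!
The pairing `s ↦ ⟪x̄(t - s), T x(s)⟫` is constant on `[0, t]`: its derivative is
`⟪x̄, T ẋ⟫ - ⟪ẋ̄, T x⟫ = ⟪x̄, A x⟫ - ⟪A* x̄, x⟫ = 0`. Comparing its values at `s = t` and `s = 0`
gives `⟪x̄(0), T x(t)⟫ = ⟪x̄(t), T x(0)⟫`, and the initial conditions turn the two sides into
`⟪ū₀, C x(t)⟫` and `⟪B* x̄(t), u₀⟫`.
-/

open ContinuousLinearMap

section DualPairing

variable {H : Type*} [NormedAddCommGroup H] [InnerProductSpace ℝ H] [CompleteSpace H]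
  {T A : H →L[ℝ] H} {x y : ℝ → H}

theorem hasDerivAt_inner_comp_const_sub_apply_eq_zero {t s : ℝ} {v w : H}
    (hx : HasDerivAt x v s) (hy : HasDerivAt y w (t - s))
    (hxeq : T v = A (x s)) (hyeq : adjoint T w = adjoint A (y (t - s))) :
    HasDerivAt (fun r => ⟪y (t - r), T (x r)⟫) 0 s := by
  have hpair : ⟪y (t - s), T v⟫ = ⟪w, T (x s)⟫ := by
    rw [hxeq, ← adjoint_inner_left, ← hyeq, adjoint_inner_left]
  have h := (hy.comp_const_sub t s).inner ℝ (T.hasFDerivAt.comp_hasDerivAt s hx)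
  rwa [Function.comp_apply, inner_neg_left, hpair, add_neg_cancel] at h

theorem inner_apply_eq_of_dual_trajectories {x' y' : ℝ → H}
    (hx : ∀ s, 0 ≤ s → HasDerivAt x (x' s) s) (hy : ∀ s, 0 ≤ s → HasDerivAt y (y' s) s)
    (hxeq : ∀ s, 0 ≤ s → T (x' s) = A (x s))
    (hyeq : ∀ s, 0 ≤ s → adjoint T (y' s) = adjoint A (y s)) {t : ℝ} (ht : 0 ≤ t) :
    ⟪y 0, T (x t)⟫ = ⟪y t, T (x 0)⟫ := by
  have hderiv : ∀ s ∈ Set.Icc 0 t, HasDerivAt (fun r => ⟪y (t - r), T (x r)⟫) 0 s :=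
    fun s ⟨hs0, hst⟩ => hasDerivAt_inner_comp_const_sub_apply_eq_zero (hx s hs0)
      (hy (t - s) (sub_nonneg.2 hst)) (hxeq s hs0) (hyeq (t - s) (sub_nonneg.2 hst))
  have hconst := constant_of_has_deriv_right_zero
    (fun s hs => (hderiv s hs).continuousAt.continuousWithinAt)
    (fun s hs => (hderiv s (Set.Ico_subset_Icc_self hs)).hasDerivWithinAt) t ⟨ht, le_rfl⟩
  simpa only [sub_self, sub_zero] using hconst

end DualPairing

/-- Output-intertwining identity (core step in the proof of Theorem 2): along a primal
trajectory of `Σ(T,A)` with initial datum `B u₀` and a dual trajectory of `Σ(T*,A*)` with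
initial datum `C* ū₀`, the outputs satisfy `ū₀ᵀ z(t) = z̄(t)ᵀ u₀`, i.e.
`⟪ū₀, C x(t)⟫ = ⟪B* x̄(t), u₀⟫` for all `t ≥ 0`. -/
theorem pie_dual_output_intertwining
    {H : Type*} [NormedAddCommGroup H] [InnerProductSpace ℝ H] [CompleteSpace H]
    (q p : ℕ) (T A : H →L[ℝ] H)
    (B : EuclideanSpace ℝ (Fin q) →L[ℝ] H) (C : H →L[ℝ] EuclideanSpace ℝ (Fin p))
    (u₀ : EuclideanSpace ℝ (Fin q)) (ub₀ : EuclideanSpace ℝ (Fin p))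
    (x xb x' xb' : ℝ → H)
    (hx : ∀ t : ℝ, 0 ≤ t → HasDerivAt x (x' t) t)
    (hxb : ∀ t : ℝ, 0 ≤ t → HasDerivAt xb (xb' t) t)
    (hxeq : ∀ t : ℝ, 0 ≤ t → T (x' t) = A (x t))
    (hxbeq : ∀ t : ℝ, 0 ≤ t →
      ContinuousLinearMap.adjoint T (xb' t) = ContinuousLinearMap.adjoint A (xb t))
    (hx0 : T (x 0) = B u₀)
    (hxb0 : ContinuousLinearMap.adjoint T (xb 0) = ContinuousLinearMap.adjoint C ub₀) :
    ∀ t : ℝ, 0 ≤ t →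
      ⟪ub₀, C (x t)⟫ = ⟪ContinuousLinearMap.adjoint B (xb t), u₀⟫ := by
  intro t ht
  calc ⟪ub₀, C (x t)⟫ = ⟪adjoint T (xb 0), x t⟫ := by rw [hxb0, adjoint_inner_left]
    _ = ⟪xb 0, T (x t)⟫ := adjoint_inner_left T (x t) (xb 0)
    _ = ⟪xb t, T (x 0)⟫ := inner_apply_eq_of_dual_trajectories hx hxb hxeq hxbeq ht
    _ = ⟪adjoint B (xb t), u₀⟫ := by rw [hx0, adjoint_inner_left]
end

section
/- Let H be a real Hilbert space, T, A : H → H, B : ℝ^q → H, C : H → ℝ^p bounded linear operators, and ε, γ > 0. Suppose P : H → H is a bounded self-adjoint operator with ⟨x, P x⟩ ≥ ε ‖x‖² for all x ∈ H, such that: (i) 2⟨P T x, A x⟩ + ‖C x‖² ≤ 0 for all x ∈ H (i.e., T*PA + A*PT + C*C ⪯ 0), and (ii) the trace of the linear map B* ∘ P ∘ B : ℝ^q → ℝ^q is at most γ². Then for every u₀ ∈ ℝ^q, every differentiable x : [0,∞) → H with T ẋ(t) = A x(t) for all t ≥ 0 and T x(0) = B u₀ satisfies ∫₀^∞ ‖C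 x(t)‖² dt ≤ γ² ‖u₀‖². (Theorem 3, Part 3.1: observability-Gramian LPI bound on the H₂-norm.) -/
open scoped RealInnerProductSpace
open MeasureTheory

lemma trace_eq_sum_inner' {ι : Type*} [Fintype ι] {E : Type*}
    [NormedAddCommGroup E] [InnerProductSpace ℝ E] [FiniteDimensional ℝ E]
    (b : OrthonormalBasis ι ℝ E) (M : E →ₗ[ℝ] E) :
    LinearMap.trace ℝ E M = ∑ i, ⟪b i, M (b i)⟫ := by
  classical
  rw [LinearMap.trace_eq_matrix_trace ℝ b.toBasis, Matrix.trace]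
  simp [Matrix.diag, LinearMap.toMatrix_apply, OrthonormalBasis.coe_toBasis_repr_apply,
    OrthonormalBasis.repr_apply_apply, OrthonormalBasis.coe_toBasis, real_inner_comm]

lemma inner_le_trace_mul_sq {E : Type*}
    [NormedAddCommGroup E] [InnerProductSpace ℝ E] [FiniteDimensional ℝ E]
    (M : E →ₗ[ℝ] E) (hpos : ∀ u : E, 0 ≤ ⟪u, M u⟫) (u : E) :
    ⟪u, M u⟫ ≤ LinearMap.trace ℝ E M * ‖u‖ ^ 2 := by
  classical
  rcases eq_or_ne u 0 with rfl | hu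
  · simp
  · set v : E := ‖u‖⁻¹ • u with hv
    have hnu : ‖u‖ ≠ 0 := norm_ne_zero_iff.mpr hu
    have hvnorm : ‖v‖ = 1 := by
      simp [hv, norm_smul, abs_of_nonneg (inv_nonneg.mpr (norm_nonneg u)), inv_mul_cancel₀ hnu]
    have horth : Orthonormal ℝ ((↑) : ({v} : Set E) → E) := by
      rw [orthonormal_subtype_iff_ite]
      intro x hx y hy
      simp only [Set.mem_singleton_iff] at hx hy
      subst hx; subst hy
      simp [real_inner_self_eq_norm_sq, hvnorm]
    obtain ⟨s, b, hsub, hb⟩ := horth.exists_orthonormalBasis_extension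
    have hvs : v ∈ s := hsub rfl
    have htr : LinearMap.trace ℝ E M = ∑ i : s, ⟪(i : E), M i⟫ := by
      rw [trace_eq_sum_inner' b M]
      exact Finset.sum_congr rfl fun i _ => by rw [hb]
    have hvle : ⟪v, M v⟫ ≤ LinearMap.trace ℝ E M := by
      rw [htr]
      exact Finset.single_le_sum (f := fun i : s => ⟪(i : E), M i⟫)
        (fun i _ => hpos i) (Finset.mem_univ (⟨v, hvs⟩ : s))
    have hvv : ⟪v, M v⟫ = ‖u‖⁻¹ * (‖u‖⁻¹ * ⟪u, M u⟫) := by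
      simp [hv, M.map_smul, inner_smul_left, inner_smul_right]
    have key : ⟪u, M u⟫ = ‖u‖ ^ 2 * ⟪v, M v⟫ := by
      rw [hvv]; field_simp
    rw [key, mul_comm]
    exact mul_le_mul_of_nonneg_right hvle (sq_nonneg _)

/-- **Theorem 3, Part 3.1 (observability-Gramian LPI bound on the `H₂`-norm).**
If `P ⪰ εI` is self-adjoint with `T*PA + A*PT + C*C ⪯ 0` and `trace(B*PB) ≤ γ²`, then every
solution of `Σ(T,A)` with initial datum `B u₀` satisfies `∫₀^∞ ‖C x(t)‖² dt ≤ γ² ‖u₀‖²`. -/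
theorem pie_H2_norm_bound_observability
    {H : Type*} [NormedAddCommGroup H] [InnerProductSpace ℝ H] [CompleteSpace H]
    (q p : ℕ) (T A : H →L[ℝ] H)
    (B : EuclideanSpace ℝ (Fin q) →L[ℝ] H) (C : H →L[ℝ] EuclideanSpace ℝ (Fin p))
    (ε γ : ℝ) (hε : 0 < ε) (hγ : 0 < γ)
    (P : H →L[ℝ] H) (hPsa : IsSelfAdjoint P)
    (hPpos : ∀ x : H, ε * ‖x‖ ^ 2 ≤ ⟪x, P x⟫)
    (hLPI : ∀ x : H, 2 * ⟪P (T x), A x⟫ + ‖C x‖ ^ 2 ≤ 0)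
    (htrace :
      LinearMap.trace ℝ (EuclideanSpace ℝ (Fin q))
        ((ContinuousLinearMap.adjoint B ∘L P ∘L B).toLinearMap) ≤ γ ^ 2) :
    ∀ (u₀ : EuclideanSpace ℝ (Fin q)) (x x' : ℝ → H),
      (∀ t : ℝ, 0 ≤ t → HasDerivAt x (x' t) t) →
      (∀ t : ℝ, 0 ≤ t → T (x' t) = A (x t)) →
      T (x 0) = B u₀ →
      (∫ t in Set.Ioi (0 : ℝ), ‖C (x t)‖ ^ 2) ≤ γ ^ 2 * ‖u₀‖ ^ 2 := by
  intro u₀ x x' hx hTA hx0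
  have hPsym : ∀ a b : H, ⟪P a, b⟫ = ⟪a, P b⟫ :=
    fun a b => (ContinuousLinearMap.isSelfAdjoint_iff_isSymmetric.mp hPsa) a b
  set f : ℝ → ℝ := fun t => ⟪T (x t), P (T (x t))⟫ with hf_def
  set g : ℝ → ℝ := fun t => ‖C (x t)‖ ^ 2 with hg_def
  -- derivative of f
  have hfderiv : ∀ t : ℝ, 0 ≤ t →
      HasDerivAt f (2 * ⟪P (T (x t)), A (x t)⟫) t := by
    intro t ht
    have hy : HasDerivAt (fun s => T (x s)) (T (x' t)) t :=
      T.hasFDerivAt.comp_hasDerivAt t (hx t ht)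
    have hPy : HasDerivAt (fun s => P (T (x s))) (P (T (x' t))) t :=
      P.hasFDerivAt.comp_hasDerivAt t hy
    have hd := hy.inner ℝ hPy
    have heq : ⟪T (x t), P (T (x' t))⟫ + ⟪T (x' t), P (T (x t))⟫
        = 2 * ⟪P (T (x t)), A (x t)⟫ := by
      rw [hTA t ht]
      have h1 := hPsym (T (x t)) (A (x t))
      have h2 := real_inner_comm (A (x t)) (P (T (x t)))
      linarith
    rw [heq] at hd
    exact hd
  -- nonnegativity of f
  have hfnonneg : ∀ t : ℝ, 0 ≤ f t := by
    intro t
    have := hPpos (T (x t))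
    nlinarith [sq_nonneg ‖T (x t)‖, hε.le, mul_nonneg hε.le (sq_nonneg ‖T (x t)‖)]
  have hgnonneg : ∀ t : ℝ, 0 ≤ g t := fun t => sq_nonneg _
  -- continuity facts
  have hxcont : ∀ t : ℝ, 0 ≤ t → ContinuousAt x t := fun t ht => (hx t ht).continuousAt
  have hgcont : ∀ t : ℝ, 0 ≤ t → ContinuousAt g t := by
    intro t ht
    exact ((continuous_pow 2).comp (continuous_norm.comp C.continuous)).continuousAt.comp
      (hxcont t ht)
  have hgcontOn : ∀ s : ℝ, ContinuousOn g (Set.Icc 0 s) :=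
    fun s t ht => (hgcont t ht.1).continuousWithinAt
  -- the key bound on [0, s]
  have hK : ∀ s : ℝ, 0 ≤ s → (∫ t in (0:ℝ)..s, g t) ≤ f 0 := by
    intro s hs
    rcases eq_or_lt_of_le hs with rfl | hs'
    · simp [hfnonneg 0]
    set F : ℝ → ℝ := fun t => f t + ∫ u in (0:ℝ)..t, g u with hF_def
    have hint : IntegrableOn g (Set.Icc 0 s) volume :=
      (hgcontOn s).integrableOn_compact isCompact_Icc
    have hcontF : ContinuousOn F (Set.Icc 0 s) := by
      apply ContinuousOn.add
      · intro t ht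
        exact ((hfderiv t ht.1).continuousAt).continuousWithinAt
      · have := intervalIntegral.continuousOn_primitive_interval
          (μ := volume) (a := 0) (b := s) (f := g) (by rwa [Set.uIcc_of_le hs])
        rwa [Set.uIcc_of_le hs] at this
    have hderivF : ∀ t ∈ Set.Ioo (0:ℝ) s, HasDerivAt F (2 * ⟪P (T (x t)), A (x t)⟫ + g t) t := by
      intro t ht
      refine (hfderiv t ht.1.le).add ?_
      have hii : IntervalIntegrable g volume 0 t := by
        rw [intervalIntegrable_iff_integrableOn_Icc_of_le ht.1.le]
        exact hint.mono_set (Set.Icc_subset_Icc le_rfl ht.2.le)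
      exact intervalIntegral.integral_hasDerivAt_right hii
        (ContinuousAt.stronglyMeasurableAtFilter isOpen_Ioi
          (fun u hu => hgcont u (le_of_lt hu)) t ht.1) (hgcont t ht.1.le)
    have hanti : AntitoneOn F (Set.Icc 0 s) := by
      apply antitoneOn_of_deriv_nonpos (convex_Icc 0 s) hcontF
      · rw [interior_Icc]
        exact fun t ht => (hderivF t ht).differentiableAt.differentiableWithinAt
      · rw [interior_Icc]
        intro t ht
        rw [(hderivF t ht).deriv]
        exact hLPI (x t)
    have hFs : F s ≤ F 0 := hanti (Set.left_mem_Icc.mpr hs) (Set.mem_Icc.mpr ⟨hs, le_rfl⟩) hs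
    have hF0 : F 0 = f 0 := by simp [hF_def]
    have : f s + ∫ u in (0:ℝ)..s, g u ≤ f 0 := by rw [← hF0]; exact hFs
    linarith [hfnonneg s]
  -- bound f 0 by γ² ‖u₀‖²
  have hf0 : f 0 ≤ γ ^ 2 * ‖u₀‖ ^ 2 := by
    have h1 : f 0 = ⟪u₀, (ContinuousLinearMap.adjoint B ∘L P ∘L B) u₀⟫ := by
      simp only [hf_def, hx0, ContinuousLinearMap.coe_comp', Function.comp_apply]
      rw [ContinuousLinearMap.adjoint_inner_right]
    have hpos : ∀ u : EuclideanSpace ℝ (Fin q),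
        0 ≤ ⟪u, ((ContinuousLinearMap.adjoint B ∘L P ∘L B).toLinearMap) u⟫ := by
      intro u
      simp only [ContinuousLinearMap.coe_coe, ContinuousLinearMap.coe_comp',
        Function.comp_apply]
      rw [ContinuousLinearMap.adjoint_inner_right]
      have := hPpos (B u)
      nlinarith [mul_nonneg hε.le (sq_nonneg ‖B u‖)]
    have h2 := inner_le_trace_mul_sq _ hpos u₀
    have h3 : LinearMap.trace ℝ (EuclideanSpace ℝ (Fin q))
        ((ContinuousLinearMap.adjoint B ∘L P ∘L B).toLinearMap) * ‖u₀‖ ^ 2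
        ≤ γ ^ 2 * ‖u₀‖ ^ 2 :=
      mul_le_mul_of_nonneg_right htrace (sq_nonneg _)
    calc f 0 = ⟪u₀, ((ContinuousLinearMap.adjoint B ∘L P ∘L B).toLinearMap) u₀⟫ := h1
      _ ≤ _ := h2
      _ ≤ _ := h3
  -- conclude
  by_cases hint : IntegrableOn g (Set.Ioi 0) volume
  · have htend := MeasureTheory.intervalIntegral_tendsto_integral_Ioi 0 hint
      (Filter.tendsto_id (α := ℝ))
    refine le_of_tendsto htend ?_
    filter_upwards [Filter.eventually_ge_atTop (0:ℝ)] with s hs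
    exact (hK s hs).trans hf0
  · rw [MeasureTheory.integral_undef hint]
    positivity
end

section
/- Let H be a real Hilbert space, T, A : H → H, B : ℝ^q → H, C : H → ℝ^p bounded linear operators, and ε, γ > 0. Suppose P : H → H is a bounded self-adjoint operator with ⟨x, P x⟩ ≥ ε ‖x‖² for all x ∈ H, such that: (i) 2⟨P T* x, A* x⟩ + ‖B* x‖² ≤ 0 for all x ∈ H (i.e., T P A* + A P T* + B B* ⪯ 0), and (ii) the trace of the linear map C ∘ P ∘ C* : ℝ^p → ℝ^p is at most γ². Assume additionally that for every ū₀ ∈ ℝ^p there exists a differentiable x̄ : [0,∞) → H with T* ẋ̄(t) = A* x̄(t) for all t ≥ 0 and T* x̄(0) = C* ū₀. Then for every u₀ ∈ ℝ^q, every differentiable x : [0,∞) → H with T ẋ(t) = A x(t) for all t ≥ 0 and T x(0) = B u₀ satisfies ∫₀^∞ ‖C x(t)‖² dt ≤ γ² ‖u₀‖². (Theorem 3, Part 3.2: controllability-Gramian LPI bound on the H₂-norm, via duality.) -/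
open scoped RealInnerProductSpace

/-!
For each basis vector `bᵢ` of `ℝᵖ` take the dual solution `yᵢ` with `T* yᵢ(0) = C* bᵢ`.
Differentiating `t ↦ ⟪T x(t), yᵢ(s - t)⟫` shows it is constant, which gives the duality identity
`⟪C x(s), bᵢ⟫ = ⟪u₀, B* yᵢ(s)⟫`; hence `‖C x(s)‖² ≤ ‖u₀‖² ∑ᵢ ‖B* yᵢ(s)‖²`. Along the dual
system, the LPI makes `⟪T* y, P T* y⟫` a Lyapunov function decreasing at rate `‖B* y‖²`, so
`∫₀^τ ‖B* yᵢ‖² ≤ ⟪C* bᵢ, P C* bᵢ⟫`, and summing over `i` bounds the output energy by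
`‖u₀‖² trace(C P C*) ≤ γ² ‖u₀‖²` on every finite horizon.
-/

open MeasureTheory Set ContinuousLinearMap

lemma integral_Ioi_le_of_forall_intervalIntegral_le {f : ℝ → ℝ} {a c : ℝ} (hc : 0 ≤ c)
    (h : ∀ τ, a ≤ τ → ∫ t in a..τ, f t ≤ c) : ∫ t in Ioi a, f t ≤ c := by
  by_cases hf : IntegrableOn f (Ioi a)
  · exact le_of_tendsto (intervalIntegral_tendsto_integral_Ioi a hf Filter.tendsto_id)
      ((Filter.eventually_ge_atTop a).mono h)
  · rw [integral_undef hf]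
    exact hc

section

variable {H K : Type*} [NormedAddCommGroup H] [InnerProductSpace ℝ H]
  [NormedAddCommGroup K] [InnerProductSpace ℝ K]

def IsPIESolution (T A : H →L[ℝ] K) (x x' : ℝ → H) : Prop :=
  (∀ t, 0 ≤ t → HasDerivAt x (x' t) t) ∧ ∀ t, 0 ≤ t → T (x' t) = A (x t)

namespace IsPIESolution

variable {T A : H →L[ℝ] K} {x x' : ℝ → H}

lemma continuousOn (hx : IsPIESolution T A x x') : ContinuousOn x (Ici 0) :=
  fun t ht => (hx.1 t ht).continuousAt.continuousWithinAt

lemma continuousOn_norm_sq {F : Type*} [NormedAddCommGroup F] [NormedSpace ℝ F]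
    (hx : IsPIESolution T A x x') (C : H →L[ℝ] F) :
    ContinuousOn (fun t => ‖C (x t)‖ ^ 2) (Ici 0) :=
  (C.continuous.comp_continuousOn hx.continuousOn).norm.pow 2

lemma hasDerivAt_apply (hx : IsPIESolution T A x x') {t : ℝ} (ht : 0 ≤ t) :
    HasDerivAt (fun s => T (x s)) (A (x t)) t := by
  simpa [Function.comp_def, hx.2 t ht] using T.hasFDerivAt.comp_hasDerivAt t (hx.1 t ht)

lemma intervalIntegral_norm_sq_le {F : Type*} [NormedAddCommGroup F] [NormedSpace ℝ F]
    (hx : IsPIESolution T A x x') {C : H →L[ℝ] F} {P : K →L[ℝ] K} (hP : P.IsPositive)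
    (hLPI : ∀ y, 2 * ⟪P (T y), A y⟫ + ‖C y‖ ^ 2 ≤ 0) {τ : ℝ} (hτ : 0 ≤ τ) :
    ∫ t in 0..τ, ‖C (x t)‖ ^ 2 ≤ ⟪T (x 0), P (T (x 0))⟫ := by
  set V : ℝ → ℝ := fun t => ⟪T (x t), P (T (x t))⟫
  have hV : ∀ t, 0 ≤ t → HasDerivAt V (2 * ⟪P (T (x t)), A (x t)⟫) t := by
    intro t ht
    have hTx := hx.hasDerivAt_apply ht
    refine (hTx.inner ℝ (P.hasFDerivAt.comp_hasDerivAt t hTx)).congr_deriv ?_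
    simp only [Function.comp_apply]
    rw [← hP.inner_left_eq_inner_right, real_inner_comm (A (x t))]
    ring
  have hVcont : ContinuousOn V (Icc 0 τ) := fun t ht =>
    (hV t ht.1).continuousAt.continuousWithinAt
  -- `-V` has derivative `-2⟪P T x, A x⟫`, which the LPI bounds below by `‖C x‖²`.
  have henergy := intervalIntegral.integral_le_sub_of_hasDeriv_right_of_le hτ hVcont.neg
    (fun t ht => (hV t ht.1.le).neg.hasDerivWithinAt)
    ((hx.continuousOn_norm_sq C).mono Icc_subset_Ici_self).integrableOn_Icc
    (fun t _ => by linarith [hLPI (x t)])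
  have hVτ : 0 ≤ V τ := hP.inner_nonneg_right _
  simp only [Pi.neg_apply] at henergy
  linarith

lemma inner_apply_eq_inner_apply [CompleteSpace H] [CompleteSpace K]
    (hx : IsPIESolution T A x x') {y y' : ℝ → K}
    (hy : IsPIESolution (adjoint T) (adjoint A) y y') {s : ℝ} (hs : 0 ≤ s) :
    ⟪T (x s), y 0⟫ = ⟪T (x 0), y s⟫ := by
  set f : ℝ → ℝ := fun t => ⟪T (x t), y (s - t)⟫
  have hf : ∀ t ∈ Icc 0 s, HasDerivAt f 0 t := by
    intro t ht
    have hst : 0 ≤ s - t := sub_nonneg.2 ht.2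
    have hy' : HasDerivAt (fun u => y (s - u)) (-y' (s - t)) t := by
      simpa [Function.comp_def] using (hy.1 (s - t) hst).scomp t ((hasDerivAt_id t).const_sub s)
    refine ((hx.hasDerivAt_apply ht.1).inner ℝ hy').congr_deriv ?_
    rw [inner_neg_right, ← adjoint_inner_right, hy.2 _ hst, adjoint_inner_right]
    ring
  have := constant_of_has_deriv_right_zero (fun t ht => (hf t ht).continuousAt.continuousWithinAt)
    (fun t ht => (hf t (Ico_subset_Icc_self ht)).hasDerivWithinAt) s (right_mem_Icc.2 hs)
  simpa [f] using this

end IsPIESolution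

section Duality

variable [CompleteSpace H] [CompleteSpace K] {U F ι : Type*}
  [NormedAddCommGroup U] [InnerProductSpace ℝ U] [NormedAddCommGroup F] [InnerProductSpace ℝ F]
  [CompleteSpace U] [CompleteSpace F] [Fintype ι]

lemma trace_comp_comp_adjoint_eq_sum_inner (C : H →L[ℝ] F) (P : H →L[ℝ] H)
    (b : OrthonormalBasis ι ℝ F) :
    LinearMap.trace ℝ F (C ∘L P ∘L adjoint C).toLinearMap =
      ∑ i, ⟪adjoint C (b i), P (adjoint C (b i))⟫ := by
  rw [LinearMap.trace_eq_sum_inner _ b]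
  exact Finset.sum_congr rfl fun i _ => (adjoint_inner_left C _ _).symm

namespace IsPIESolution

variable {T A : H →L[ℝ] K} {B : U →L[ℝ] K} {C : H →L[ℝ] F} {x x' : ℝ → H} {u₀ : U}

lemma inner_output_eq (hx : IsPIESolution T A x x') (hx0 : T (x 0) = B u₀) {y y' : ℝ → K}
    (hy : IsPIESolution (adjoint T) (adjoint A) y y') {v : F}
    (hy0 : adjoint T (y 0) = adjoint C v) {s : ℝ} (hs : 0 ≤ s) :
    ⟪C (x s), v⟫ = ⟪u₀, adjoint B (y s)⟫ :=
  calc ⟪C (x s), v⟫ = ⟪T (x s), y 0⟫ := by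
        rw [← adjoint_inner_right, ← hy0, adjoint_inner_right]
    _ = ⟪T (x 0), y s⟫ := hx.inner_apply_eq_inner_apply hy hs
    _ = ⟪u₀, adjoint B (y s)⟫ := by rw [hx0, adjoint_inner_right]

variable {y y' : ι → ℝ → K}

lemma norm_sq_output_le (hx : IsPIESolution T A x x') (hx0 : T (x 0) = B u₀)
    (b : OrthonormalBasis ι ℝ F) (hy : ∀ i, IsPIESolution (adjoint T) (adjoint A) (y i) (y' i))
    (hy0 : ∀ i, adjoint T (y i 0) = adjoint C (b i)) {s : ℝ} (hs : 0 ≤ s) :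
    ‖C (x s)‖ ^ 2 ≤ ‖u₀‖ ^ 2 * ∑ i, ‖adjoint B (y i s)‖ ^ 2 := by
  rw [← b.sum_sq_inner_left, Finset.mul_sum]
  refine Finset.sum_le_sum fun i _ => ?_
  rw [hx.inner_output_eq hx0 (hy i) (hy0 i) hs, ← mul_pow, ← sq_abs]
  exact pow_le_pow_left₀ (abs_nonneg _) (abs_real_inner_le_norm _ _) 2

lemma intervalIntegral_norm_sq_output_le (hx : IsPIESolution T A x x') (hx0 : T (x 0) = B u₀)
    (b : OrthonormalBasis ι ℝ F) (hy : ∀ i, IsPIESolution (adjoint T) (adjoint A) (y i) (y' i))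
    (hy0 : ∀ i, adjoint T (y i 0) = adjoint C (b i)) {P : H →L[ℝ] H} (hP : P.IsPositive)
    (hLPI : ∀ z, 2 * ⟪P (adjoint T z), adjoint A z⟫ + ‖adjoint B z‖ ^ 2 ≤ 0)
    {τ : ℝ} (hτ : 0 ≤ τ) :
    ∫ t in 0..τ, ‖C (x t)‖ ^ 2 ≤
      ‖u₀‖ ^ 2 * LinearMap.trace ℝ F (C ∘L P ∘L adjoint C).toLinearMap := by
  have hBy : ∀ i, ContinuousOn (fun t => ‖adjoint B (y i t)‖ ^ 2) (Icc 0 τ) := fun i =>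
    ((hy i).continuousOn_norm_sq _).mono Icc_subset_Ici_self
  calc ∫ t in 0..τ, ‖C (x t)‖ ^ 2
      ≤ ∫ t in 0..τ, ‖u₀‖ ^ 2 * ∑ i, ‖adjoint B (y i t)‖ ^ 2 := by
        refine intervalIntegral.integral_mono_on hτ ?_ ?_ fun t ht =>
          hx.norm_sq_output_le hx0 b hy hy0 ht.1
        · exact ((hx.continuousOn_norm_sq C).mono Icc_subset_Ici_self).intervalIntegrable_of_Icc hτ
        · exact ContinuousOn.intervalIntegrable_of_Icc hτ <|
            continuousOn_const.mul (continuousOn_finsetSum _ fun i _ => hBy i)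
    _ = ‖u₀‖ ^ 2 * ∑ i, ∫ t in 0..τ, ‖adjoint B (y i t)‖ ^ 2 := by
        rw [intervalIntegral.integral_const_mul, intervalIntegral.integral_finsetSum
          fun i _ => (hBy i).intervalIntegrable_of_Icc hτ]
    _ ≤ ‖u₀‖ ^ 2 * ∑ i, ⟪adjoint C (b i), P (adjoint C (b i))⟫ := by
        gcongr with i
        rw [← hy0 i]
        exact (hy i).intervalIntegral_norm_sq_le hP hLPI hτ
    _ = _ := by rw [trace_comp_comp_adjoint_eq_sum_inner C P b]

end IsPIESolution

end Duality

end

theorem pie_H2_norm_bound_controllability_general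
    {H : Type*} [NormedAddCommGroup H] [InnerProductSpace ℝ H] [CompleteSpace H]
    (q p : ℕ) (T A : H →L[ℝ] H)
    (B : EuclideanSpace ℝ (Fin q) →L[ℝ] H) (C : H →L[ℝ] EuclideanSpace ℝ (Fin p))
    (ε γ : ℝ) (hε : 0 < ε)
    (P : H →L[ℝ] H) (hPsa : IsSelfAdjoint P)
    (hPpos : ∀ x : H, ε * ‖x‖ ^ 2 ≤ ⟪x, P x⟫)
    (hLPI : ∀ x : H,
      2 * ⟪P (ContinuousLinearMap.adjoint T x), ContinuousLinearMap.adjoint A x⟫ +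
        ‖ContinuousLinearMap.adjoint B x‖ ^ 2 ≤ 0)
    (htrace :
      LinearMap.trace ℝ (EuclideanSpace ℝ (Fin p))
        ((C ∘L P ∘L ContinuousLinearMap.adjoint C).toLinearMap) ≤ γ ^ 2)
    (hdual_exist : ∀ ub₀ : EuclideanSpace ℝ (Fin p), ∃ xb xb' : ℝ → H,
      (∀ t : ℝ, 0 ≤ t → HasDerivAt xb (xb' t) t) ∧
      (∀ t : ℝ, 0 ≤ t →
        ContinuousLinearMap.adjoint T (xb' t) = ContinuousLinearMap.adjoint A (xb t)) ∧
      ContinuousLinearMap.adjoint T (xb 0) = ContinuousLinearMap.adjoint C ub₀) :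
    ∀ (u₀ : EuclideanSpace ℝ (Fin q)) (x x' : ℝ → H),
      (∀ t : ℝ, 0 ≤ t → HasDerivAt x (x' t) t) →
      (∀ t : ℝ, 0 ≤ t → T (x' t) = A (x t)) →
      T (x 0) = B u₀ →
      (∫ t in Set.Ioi (0 : ℝ), ‖C (x t)‖ ^ 2) ≤ γ ^ 2 * ‖u₀‖ ^ 2 := by
  intro u₀ x x' hx hx' hx0
  have hP : P.IsPositive := isPositive_def'.2 ⟨hPsa, fun z => by
    rw [reApplyInnerSelf_apply, RCLike.re_to_real, real_inner_comm]
    exact (mul_nonneg hε.le (sq_nonneg _)).trans (hPpos z)⟩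
  set b := EuclideanSpace.basisFun (Fin p) ℝ
  choose y y' hy hy' hy0 using fun i => hdual_exist (b i)
  refine integral_Ioi_le_of_forall_intervalIntegral_le (by positivity) fun τ hτ => ?_
  calc ∫ t in 0..τ, ‖C (x t)‖ ^ 2
      ≤ ‖u₀‖ ^ 2 * LinearMap.trace ℝ _ (C ∘L P ∘L adjoint C).toLinearMap :=
        IsPIESolution.intervalIntegral_norm_sq_output_le ⟨hx, hx'⟩ hx0 b
          (fun i => ⟨hy i, hy' i⟩) hy0 hP hLPI hτ
    _ ≤ γ ^ 2 * ‖u₀‖ ^ 2 := by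
        rw [mul_comm]
        gcongr

/-- **Theorem 3, Part 3.2 (controllability-Gramian LPI bound on the `H₂`-norm, via duality).**
If `P ⪰ εI` is self-adjoint with `T P A* + A P T* + B B* ⪯ 0` and `trace(C P C*) ≤ γ²`, and
dual solutions with initial data `C* ū₀` exist, then every solution of `Σ(T,A)` with initial
datum `B u₀` satisfies `∫₀^∞ ‖C x(t)‖² dt ≤ γ² ‖u₀‖²`. -/
theorem pie_H2_norm_bound_controllability
    {H : Type*} [NormedAddCommGroup H] [InnerProductSpace ℝ H] [CompleteSpace H]
    (q p : ℕ) (T A : H →L[ℝ] H)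
    (B : EuclideanSpace ℝ (Fin q) →L[ℝ] H) (C : H →L[ℝ] EuclideanSpace ℝ (Fin p))
    (ε γ : ℝ) (hε : 0 < ε) (hγ : 0 < γ)
    (P : H →L[ℝ] H) (hPsa : IsSelfAdjoint P)
    (hPpos : ∀ x : H, ε * ‖x‖ ^ 2 ≤ ⟪x, P x⟫)
    (hLPI : ∀ x : H,
      2 * ⟪P (ContinuousLinearMap.adjoint T x), ContinuousLinearMap.adjoint A x⟫ +
        ‖ContinuousLinearMap.adjoint B x‖ ^ 2 ≤ 0)
    (htrace :
      LinearMap.trace ℝ (EuclideanSpace ℝ (Fin p))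
        ((C ∘L P ∘L ContinuousLinearMap.adjoint C).toLinearMap) ≤ γ ^ 2)
    (hdual_exist : ∀ ub₀ : EuclideanSpace ℝ (Fin p), ∃ xb xb' : ℝ → H,
      (∀ t : ℝ, 0 ≤ t → HasDerivAt xb (xb' t) t) ∧
      (∀ t : ℝ, 0 ≤ t →
        ContinuousLinearMap.adjoint T (xb' t) = ContinuousLinearMap.adjoint A (xb t)) ∧
      ContinuousLinearMap.adjoint T (xb 0) = ContinuousLinearMap.adjoint C ub₀) :
    ∀ (u₀ : EuclideanSpace ℝ (Fin q)) (x x' : ℝ → H),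
      (∀ t : ℝ, 0 ≤ t → HasDerivAt x (x' t) t) →
      (∀ t : ℝ, 0 ≤ t → T (x' t) = A (x t)) →
      T (x 0) = B u₀ →
      (∫ t in Set.Ioi (0 : ℝ), ‖C (x t)‖ ^ 2) ≤ γ ^ 2 * ‖u₀‖ ^ 2 :=
  pie_H2_norm_bound_controllability_general q p T A B C ε γ hε P hPsa hPpos hLPI htrace hdual_exist
end

section
/- Let H be a real Hilbert space, T, A : H → H and C : H → ℝ^p bounded linear operators, and P : H → H a bounded self-adjoint operator such that 2⟨P T x, A x⟩ + ‖C x‖² ≤ 0 for all x ∈ H. Then every differentiable x : [0,∞) → H with T ẋ(t) = A x(t) for all t ≥ 0 satisfies, for every t ≥ 0, the dissipation inequality ⟨T x(t), P T x(t)⟩ + ∫₀ᵗ ‖C x(s)‖² ds ≤ ⟨T x(0), P T x(0)⟩. -/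
open scoped RealInnerProductSpace

/-- Lyapunov dissipation inequality (key step in the proof of Theorem 3.1): if `P` is
self-adjoint and `T*PA + A*PT + C*C ⪯ 0` (as a quadratic form), then along every solution
of `Σ(T,A)` the storage function `V(t) = ⟪T x(t), P T x(t)⟫` satisfies
`V(t) + ∫₀ᵗ ‖C x(s)‖² ds ≤ V(0)`. -/
theorem pie_dissipation_inequality
    {H : Type*} [NormedAddCommGroup H] [InnerProductSpace ℝ H] [CompleteSpace H]
    (p : ℕ) (T A : H →L[ℝ] H) (C : H →L[ℝ] EuclideanSpace ℝ (Fin p))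
    (P : H →L[ℝ] H) (hPsa : IsSelfAdjoint P)
    (hLPI : ∀ x : H, 2 * ⟪P (T x), A x⟫ + ‖C x‖ ^ 2 ≤ 0) :
    ∀ (x x' : ℝ → H),
      (∀ t : ℝ, 0 ≤ t → HasDerivAt x (x' t) t) →
      (∀ t : ℝ, 0 ≤ t → T (x' t) = A (x t)) →
      ∀ t : ℝ, 0 ≤ t →
        ⟪T (x t), P (T (x t))⟫ + ∫ s in (0 : ℝ)..t, ‖C (x s)‖ ^ 2 ≤
          ⟪T (x 0), P (T (x 0))⟫ := by
  intro x x' hx hx' t ht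
  -- the "clamped" integrand, continuous on all of ℝ
  set h : ℝ → ℝ := fun s => ‖C (x (max s 0))‖ ^ 2 with hh
  have hcont : Continuous h := by
    rw [continuous_iff_continuousAt]
    intro s
    have hxc : ContinuousAt x (max s 0) := (hx _ (le_max_right s 0)).continuousAt
    have hm : ContinuousAt (fun b : ℝ => max b 0) s :=
      (continuous_id.max continuous_const).continuousAt
    have hxc2 : ContinuousAt (fun b => x (max b 0)) s :=
      ContinuousAt.comp (g := x) (f := fun b : ℝ => max b 0) hxc hm
    exact (C.continuous.continuousAt.comp hxc2).norm.pow 2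
  -- the candidate Lyapunov function
  set g : ℝ → ℝ := fun u => ⟪T (x u), P (T (x u))⟫ + ∫ s in (0 : ℝ)..u, h s with hg
  have hanti : AntitoneOn g (Set.Ici (0 : ℝ)) := by
    apply antitoneOn_of_hasDerivWithinAt_nonpos (f' := fun u =>
        2 * ⟪P (T (x u)), A (x u)⟫ + ‖C (x u)‖ ^ 2) (convex_Ici 0)
    · -- continuity of g on [0, ∞)
      intro u hu
      have hxc : ContinuousAt x u := (hx u hu).continuousAt
      have h1 : ContinuousAt (fun u => ⟪T (x u), P (T (x u))⟫) u := by
        have hTc : ContinuousAt (fun u => T (x u)) u := T.continuous.continuousAt.comp hxc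
        have hPc : ContinuousAt (fun u => P (T (x u))) u :=
          P.continuous.continuousAt.comp hTc
        exact hTc.inner hPc
      have h2 : Continuous (fun u => ∫ s in (0 : ℝ)..u, h s) :=
        intervalIntegral.continuous_primitive (fun a b => hcont.intervalIntegrable a b) 0
      exact (h1.add h2.continuousAt).continuousWithinAt
    · -- derivative on the interior
      intro u hu
      rw [interior_Ici] at hu
      have hu' : (0 : ℝ) ≤ u := le_of_lt hu
      have hT : HasDerivAt (fun u => T (x u)) (T (x' u)) u :=
        T.hasFDerivAt.comp_hasDerivAt u (hx u hu')
      have hPT : HasDerivAt (fun u => P (T (x u))) (P (T (x' u))) u :=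
        P.hasFDerivAt.comp_hasDerivAt u hT
      have hinner := hT.inner ℝ hPT
      have hderiv1 : ⟪T (x u), P (T (x' u))⟫ + ⟪T (x' u), P (T (x u))⟫ =
          2 * ⟪P (T (x u)), A (x u)⟫ := by
        have hsym : ∀ u v : H, ⟪u, P v⟫ = ⟪P u, v⟫ := fun u v =>
          (hPsa.isSymmetric u v).symm
        rw [hsym, real_inner_comm (T (x' u)), hx' u hu', two_mul, real_inner_comm]
      rw [hderiv1] at hinner
      have hint : HasDerivAt (fun u => ∫ s in (0 : ℝ)..u, h s) (h u) u :=
        intervalIntegral.integral_hasDerivAt_right (hcont.intervalIntegrable 0 u)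
          hcont.aestronglyMeasurable.stronglyMeasurableAtFilter hcont.continuousAt
      have hhu : h u = ‖C (x u)‖ ^ 2 := by simp [hh, max_eq_left hu']
      rw [hhu] at hint
      exact ((hinner.add hint).hasDerivWithinAt).mono interior_subset
    · intro u _
      exact hLPI (x u)
  have hgt : g t ≤ g 0 := hanti Set.self_mem_Ici ht ht
  have hcongr : (∫ s in (0 : ℝ)..t, h s) = ∫ s in (0 : ℝ)..t, ‖C (x s)‖ ^ 2 := by
    apply intervalIntegral.integral_congr
    intro s hs
    rw [Set.uIcc_of_le ht] at hs
    simp [hh, max_eq_left hs.1]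
  simpa [hg, hcongr] using hgt
end

section
/- Let H be a real Hilbert space. Let P, Q : H → H be bounded linear operators with P self-adjoint, P ∘ Q = id and Q ∘ P = id, and ⟨x, P x⟩ ≥ 0 for all x ∈ H. Let M : ℝ^q → H and W : ℝ^q → ℝ^q be bounded linear operators with W self-adjoint. If ⟨x, P x⟩ − 2⟨M u, x⟩ + ⟨u, W u⟩ ≥ 0 for all x ∈ H and u ∈ ℝ^q, then trace(M* ∘ Q ∘ M) ≤ trace(W), where trace denotes the trace of a linear endomorphism of ℝ^q. -/
open scoped RealInnerProductSpace

lemma trace_eq_sum_inner_aux (q : ℕ)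
    (T : EuclideanSpace ℝ (Fin q) →ₗ[ℝ] EuclideanSpace ℝ (Fin q)) :
    LinearMap.trace ℝ (EuclideanSpace ℝ (Fin q)) T =
      ∑ i, ⟪(EuclideanSpace.basisFun (Fin q) ℝ) i, T ((EuclideanSpace.basisFun (Fin q) ℝ) i)⟫ := by
  rw [LinearMap.trace_eq_matrix_trace ℝ (EuclideanSpace.basisFun (Fin q) ℝ).toBasis, Matrix.trace]
  congr 1
  ext i
  rw [Matrix.diag_apply, LinearMap.toMatrix_apply]
  simp [EuclideanSpace.basisFun_apply, EuclideanSpace.inner_single_left]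

lemma trace_mono_aux (q : ℕ)
    (A B : EuclideanSpace ℝ (Fin q) →L[ℝ] EuclideanSpace ℝ (Fin q))
    (h : ∀ u, ⟪u, A u⟫ ≤ ⟪u, B u⟫) :
    LinearMap.trace ℝ (EuclideanSpace ℝ (Fin q)) A.toLinearMap ≤
      LinearMap.trace ℝ (EuclideanSpace ℝ (Fin q)) B.toLinearMap := by
  rw [trace_eq_sum_inner_aux, trace_eq_sum_inner_aux]
  exact Finset.sum_le_sum fun i _ => h _

/-- Schur complement plus trace monotonicity (the step in the proofs of Corollaries 4 and 5):
if `P ⪰ 0` is self-adjoint with two-sided inverse `Q = P⁻¹` and the block operator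
`[[P, −M], [−M*, W]]` is positive semidefinite, then `trace(M* P⁻¹ M) ≤ trace(W)`. -/
theorem schur_complement_trace
    {H : Type*} [NormedAddCommGroup H] [InnerProductSpace ℝ H] [CompleteSpace H]
    (q : ℕ) (P Q : H →L[ℝ] H) (hPsa : IsSelfAdjoint P)
    (hPQ : P ∘L Q = ContinuousLinearMap.id ℝ H)
    (hQP : Q ∘L P = ContinuousLinearMap.id ℝ H)
    (hPpos : ∀ x : H, 0 ≤ ⟪x, P x⟫)
    (M : EuclideanSpace ℝ (Fin q) →L[ℝ] H)
    (W : EuclideanSpace ℝ (Fin q) →L[ℝ] EuclideanSpace ℝ (Fin q)) (hWsa : IsSelfAdjoint W)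
    (hblock : ∀ (x : H) (u : EuclideanSpace ℝ (Fin q)),
      0 ≤ ⟪x, P x⟫ - 2 * ⟪M u, x⟫ + ⟪u, W u⟫) :
    LinearMap.trace ℝ (EuclideanSpace ℝ (Fin q))
        ((ContinuousLinearMap.adjoint M ∘L Q ∘L M).toLinearMap) ≤
      LinearMap.trace ℝ (EuclideanSpace ℝ (Fin q)) W.toLinearMap := by
  apply trace_mono_aux
  intro u
  have h := hblock (Q (M u)) u
  have hPQ' : P (Q (M u)) = M u := congrArg (· (M u)) hPQ
  rw [hPQ'] at h
  have h1 : ⟪Q (M u), M u⟫ = ⟪M u, Q (M u)⟫ := real_inner_comm _ _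
  have h2 : ⟪u, (ContinuousLinearMap.adjoint M ∘L Q ∘L M) u⟫ = ⟪M u, Q (M u)⟫ := by
    rw [ContinuousLinearMap.comp_apply, ContinuousLinearMap.comp_apply,
      ContinuousLinearMap.adjoint_inner_right]
  rw [h2]
  linarith [h, h1]
end

section
/- Let H be a real Hilbert space, T, A : H → H, B₁ : ℝ^{nw} → H, C₁ : H → ℝ^{nz}, C₂ : H → ℝ^{ny} bounded linear operators, D₂₁ : ℝ^{nw} → ℝ^{ny} a linear map, and ε, γ > 0. Suppose there exist a bounded self-adjoint operator P : H → H with ⟨x, P x⟩ ≥ ε‖x‖² for all x, a bounded operator Z : ℝ^{ny} → H, and a self-adjoint linear map W : ℝ^{nw} → ℝ^{nw} such that: (i) 2⟨P T x, A x⟩ + 2⟨T x, Z (C₂ x)⟩ + ‖C₁ x‖² ≤ 0 for all x ∈ H (i.e., T*PA + A*PT + T*ZC₂ + C₂*Z*T + C₁*C₁ ⪯ 0); (ii) ⟨x, P x⟩ − 2⟨x, P(B₁ u) + Z(D₂₁ u)⟩ + ⟨u, W u⟩ ≥ 0 for all x ∈ H and u ∈ ℝ^{nw}; and (iii) trace(W)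 ≤ γ². Then for every bounded linear operator L : ℝ^{ny} → H with P ∘ L = Z (i.e., L = P⁻¹Z), and every u₀ ∈ ℝ^{nw}, every differentiable e : [0,∞) → H with T ė(t) = (A + L ∘ C₂) e(t) for all t ≥ 0 and T e(0) = −(B₁ + L ∘ D₂₁) u₀ satisfies ∫₀^∞ ‖C₁ e(t)‖² dt ≤ γ² ‖u₀‖². (Corollary 4: LPI for the H₂-optimal Luenberger estimator; γ bounds the H₂-norm of the error system Σ(T, A + L C₂, −(B₁ + L D₂₁), C₁).) -/
open scoped RealInnerProductSpace

open MeasureTheory Set Filter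

/-
The Lyapunov function `V(t) = ⟪T e(t), P T e(t)⟫` decays along the error dynamics at least as
fast as the output energy: by the operator inequality (i) and `P L = Z`,
`V' + ‖C₁ e‖² ≤ 0`, so `∫₀^∞ ‖C₁ e‖² ≤ V(0)` (`P`, hence `V`, is nonnegative as a diagonal
block of (ii)). Since `T e(0) = -(B₁ + L D₂₁) u₀`, the block
inequality (ii) with `x = (B₁ + L D₂₁) u₀` gives `V(0) ≤ ⟪u₀, W u₀⟫`, and `W`, positive
semidefinite as the other diagonal block of (ii), has quadratic form at most `trace W · ‖u₀‖² ≤ γ² ‖u₀‖²`.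
-/

/-- Extend `u / ‖u‖` to an orthonormal basis: in it the trace is a sum of nonnegative diagonal
entries, one of which is `⟪u, W u⟫ / ‖u‖²`. -/
theorem LinearMap.inner_apply_self_le_trace_mul_norm_sq {E : Type*} [NormedAddCommGroup E]
    [InnerProductSpace ℝ E] [FiniteDimensional ℝ E] (W : E →ₗ[ℝ] E) (hW : ∀ u, 0 ≤ ⟪u, W u⟫)
    (u : E) : ⟪u, W u⟫ ≤ W.trace ℝ E * ‖u‖ ^ 2 := by
  rcases eq_or_ne u 0 with rfl | hu
  · simp
  set v : E := ‖u‖⁻¹ • u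
  have hv : ‖v‖ = 1 := norm_smul_inv_norm hu
  have hv_orthonormal : Orthonormal ℝ (Subtype.val : ({v} : Set E) → E) := by
    simp [hv]
  obtain ⟨s, b, hvs, hb⟩ := hv_orthonormal.exists_orthonormalBasis_extension
  have hv_le : ⟪v, W v⟫ ≤ W.trace ℝ E := by
    rw [W.trace_eq_sum_inner b]
    simpa [hb] using
      Finset.single_le_sum (fun i _ => hW (b i)) (Finset.mem_univ ⟨v, hvs rfl⟩)
  calc ⟪u, W u⟫ = ⟪v, W v⟫ * ‖u‖ ^ 2 := by
        simp only [v, map_smul, real_inner_smul_left, real_inner_smul_right]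
        field_simp
    _ ≤ W.trace ℝ E * ‖u‖ ^ 2 := by gcongr

theorem intervalIntegral_le_sub_of_hasDerivAt_of_add_nonpos {V V' f : ℝ → ℝ} {a b : ℝ}
    (hab : a ≤ b) (hV : ∀ t ∈ Icc a b, HasDerivAt V (V' t) t) (hf : ContinuousOn f (Icc a b))
    (hdiss : ∀ t ∈ Ioo a b, V' t + f t ≤ 0) : ∫ t in a..b, f t ≤ V a - V b := by
  have := intervalIntegral.integral_le_sub_of_hasDeriv_right_of_le hab
    (g := fun t => -V t) (g' := fun t => -V' t)
    (fun t ht => (hV t ht).continuousAt.continuousWithinAt.neg)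
    (fun t ht => (hV t (Ioo_subset_Icc_self ht)).neg.hasDerivWithinAt)
    hf.integrableOn_Icc (fun t ht => by linarith [hdiss t ht])
  linarith

theorem integrableOn_Ioi_and_setIntegral_le_of_intervalIntegral_le {f : ℝ → ℝ} {a C : ℝ}
    (hf : ContinuousOn f (Ici a)) (hf_nonneg : ∀ t ∈ Ici a, 0 ≤ f t)
    (hC : ∀ b, a ≤ b → ∫ t in a..b, f t ≤ C) :
    IntegrableOn f (Ioi a) ∧ ∫ t in Ioi a, f t ≤ C := by
  have hC' : ∀ᶠ b in atTop, ∫ t in a..b, f t ≤ C := eventually_atTop.2 ⟨a, hC⟩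
  have hint : IntegrableOn f (Ioi a) := by
    refine integrableOn_Ioi_of_intervalIntegral_norm_bounded C a (b := id)
      (fun b => (hf.mono Icc_subset_Ici_self).integrableOn_Icc.mono_set Ioc_subset_Icc_self)
      tendsto_id ?_
    filter_upwards [hC', eventually_ge_atTop a] with b hb hab
    refine le_of_eq_of_le (intervalIntegral.integral_congr fun t ht => ?_) hb
    rw [id, uIcc_of_le hab] at ht
    exact Real.norm_of_nonneg (hf_nonneg t ht.1)
  exact ⟨hint, le_of_tendsto (intervalIntegral_tendsto_integral_Ioi a hint tendsto_id) hC'⟩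

theorem integrableOn_Ioi_and_setIntegral_le_of_hasDerivAt_of_add_nonpos {V V' f : ℝ → ℝ} {a : ℝ}
    (hV : ∀ t ∈ Ici a, HasDerivAt V (V' t) t) (hV_nonneg : ∀ t ∈ Ici a, 0 ≤ V t)
    (hf : ContinuousOn f (Ici a)) (hf_nonneg : ∀ t ∈ Ici a, 0 ≤ f t)
    (hdiss : ∀ t ∈ Ici a, V' t + f t ≤ 0) :
    IntegrableOn f (Ioi a) ∧ ∫ t in Ioi a, f t ≤ V a := by
  refine integrableOn_Ioi_and_setIntegral_le_of_intervalIntegral_le hf hf_nonneg fun b hab => ?_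
  have hsub : Icc a b ⊆ Ici a := Icc_subset_Ici_self
  have := intervalIntegral_le_sub_of_hasDerivAt_of_add_nonpos hab (fun t ht => hV t (hsub ht))
    (hf.mono hsub) (fun t ht => hdiss t (hsub (Ioo_subset_Icc_self ht)))
  linarith [hV_nonneg b hab]

theorem HasDerivAt.inner_apply_self {H : Type*} [NormedAddCommGroup H] [InnerProductSpace ℝ H]
    {P : H →L[ℝ] H} (hP : (P : H →ₗ[ℝ] H).IsSymmetric) {x : ℝ → H} {x' : H} {t : ℝ}
    (hx : HasDerivAt x x' t) :
    HasDerivAt (fun s => ⟪x s, P (x s)⟫) (2 * ⟪P (x t), x'⟫) t := by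
  refine (hx.inner ℝ (P.hasFDerivAt.comp_hasDerivAt t hx)).congr_deriv ?_
  have hsymm : ⟪x t, P x'⟫ = ⟪P (x t), x'⟫ := (hP (x t) x').symm
  simp only [Function.comp_apply, hsymm, real_inner_comm x' (P (x t))]
  ring

section Luenberger

variable {H U Y E : Type*} [NormedAddCommGroup H] [InnerProductSpace ℝ H]
  [NormedAddCommGroup U] [InnerProductSpace ℝ U] [NormedAddCommGroup Y] [InnerProductSpace ℝ Y]
  [NormedAddCommGroup E] [InnerProductSpace ℝ E]
  {T A P : H →L[ℝ] H} {B₁ : U →L[ℝ] H} {C₁ : H →L[ℝ] E} {C₂ : H →L[ℝ] Y} {D₂₁ : U →L[ℝ] Y}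
  {Z L : Y →L[ℝ] H} {W : U →L[ℝ] U}

theorem two_mul_inner_luenberger_add_norm_sq_nonpos (hP : (P : H →ₗ[ℝ] H).IsSymmetric)
    (hL : P ∘L L = Z)
    (hLPI : ∀ x : H, 2 * ⟪P (T x), A x⟫ + 2 * ⟪T x, Z (C₂ x)⟫ + ‖C₁ x‖ ^ 2 ≤ 0) (x : H) :
    2 * ⟪P (T x), (A + L ∘L C₂) x⟫ + ‖C₁ x‖ ^ 2 ≤ 0 := by
  have hPL : ⟪P (T x), L (C₂ x)⟫ = ⟪T x, Z (C₂ x)⟫ := by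
    rw [← hL]
    exact hP (T x) (L (C₂ x))
  simp only [add_apply, ContinuousLinearMap.comp_apply, inner_add_right, hPL]
  linarith [hLPI x]

theorem inner_luenberger_input_le_of_block_nonneg (hL : P ∘L L = Z)
    (hblock : ∀ (x : H) (u : U), 0 ≤ ⟪x, P x⟫ - 2 * ⟪x, P (B₁ u) + Z (D₂₁ u)⟫ + ⟪u, W u⟫)
    (u : U) : ⟪B₁ u + L (D₂₁ u), P (B₁ u + L (D₂₁ u))⟫ ≤ ⟪u, W u⟫ := by
  have hPL : P (B₁ u) + Z (D₂₁ u) = P (B₁ u + L (D₂₁ u)) := by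
    rw [← hL, map_add, ContinuousLinearMap.comp_apply]
  linarith [hPL ▸ hblock (B₁ u + L (D₂₁ u)) u]

end Luenberger

theorem pie_H2_optimal_estimator_general
    {H : Type*} [NormedAddCommGroup H] [InnerProductSpace ℝ H] [CompleteSpace H]
    (nw nz ny : ℕ) (T A : H →L[ℝ] H)
    (B₁ : EuclideanSpace ℝ (Fin nw) →L[ℝ] H)
    (C₁ : H →L[ℝ] EuclideanSpace ℝ (Fin nz))
    (C₂ : H →L[ℝ] EuclideanSpace ℝ (Fin ny))
    (D₂₁ : EuclideanSpace ℝ (Fin nw) →L[ℝ] EuclideanSpace ℝ (Fin ny))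
    (γ : ℝ)
    (P : H →L[ℝ] H) (hPsa : IsSelfAdjoint P)
    (Z : EuclideanSpace ℝ (Fin ny) →L[ℝ] H)
    (W : EuclideanSpace ℝ (Fin nw) →L[ℝ] EuclideanSpace ℝ (Fin nw))
    (hLPI : ∀ x : H,
      2 * ⟪P (T x), A x⟫ + 2 * ⟪T x, Z (C₂ x)⟫ + ‖C₁ x‖ ^ 2 ≤ 0)
    (hblock : ∀ (x : H) (u : EuclideanSpace ℝ (Fin nw)),
      0 ≤ ⟪x, P x⟫ - 2 * ⟪x, P (B₁ u) + Z (D₂₁ u)⟫ + ⟪u, W u⟫)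
    (htrace : LinearMap.trace ℝ (EuclideanSpace ℝ (Fin nw)) W.toLinearMap ≤ γ ^ 2) :
    ∀ L : EuclideanSpace ℝ (Fin ny) →L[ℝ] H, P ∘L L = Z →
      ∀ (u₀ : EuclideanSpace ℝ (Fin nw)) (e e' : ℝ → H),
        (∀ t : ℝ, 0 ≤ t → HasDerivAt e (e' t) t) →
        (∀ t : ℝ, 0 ≤ t → T (e' t) = (A + L ∘L C₂) (e t)) →
        T (e 0) = -(B₁ u₀ + L (D₂₁ u₀)) →
        (∫ t in Set.Ioi (0 : ℝ), ‖C₁ (e t)‖ ^ 2) ≤ γ ^ 2 * ‖u₀‖ ^ 2 := by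
  intro L hL u₀ e e' hderiv hdyn hinit
  have hP : (P : H →ₗ[ℝ] H).IsSymmetric := hPsa.isSymmetric
  have hP_nonneg (x : H) : 0 ≤ ⟪x, P x⟫ := by simpa using hblock x 0
  have hW_nonneg (u : EuclideanSpace ℝ (Fin nw)) : 0 ≤ ⟪u, W u⟫ := by simpa using hblock 0 u
  obtain ⟨-, hbound⟩ := integrableOn_Ioi_and_setIntegral_le_of_hasDerivAt_of_add_nonpos
    (V := fun t => ⟪T (e t), P (T (e t))⟫) (f := fun t => ‖C₁ (e t)‖ ^ 2)
    (fun t ht => (T.hasFDerivAt.comp_hasDerivAt t (hderiv t ht)).inner_apply_self hP)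
    (fun t _ => hP_nonneg _)
    (fun t ht => ((C₁.continuous.continuousAt.comp (hderiv t ht).continuousAt).norm.pow 2)
      |>.continuousWithinAt)
    (fun t _ => sq_nonneg _)
    (fun t ht => by
      simpa only [Function.comp_apply, hdyn t ht] using
        two_mul_inner_luenberger_add_norm_sq_nonpos hP hL hLPI (e t))
  calc (∫ t in Ioi 0, ‖C₁ (e t)‖ ^ 2)
      ≤ ⟪B₁ u₀ + L (D₂₁ u₀), P (B₁ u₀ + L (D₂₁ u₀))⟫ := by
        simpa only [hinit, map_neg, inner_neg_neg] using hbound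
    _ ≤ ⟪u₀, W u₀⟫ := inner_luenberger_input_le_of_block_nonneg hL hblock u₀
    _ ≤ LinearMap.trace ℝ _ W.toLinearMap * ‖u₀‖ ^ 2 :=
        W.toLinearMap.inner_apply_self_le_trace_mul_norm_sq hW_nonneg u₀
    _ ≤ γ ^ 2 * ‖u₀‖ ^ 2 := by gcongr

/-- **Corollary 4 (LPI for the `H₂`-optimal Luenberger estimator).**
If `P ⪰ εI` self-adjoint, `Z`, and `W` self-adjoint satisfy the estimator LPI
(i) `T*PA + A*PT + T*ZC₂ + C₂*Z*T + C₁*C₁ ⪯ 0`,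
(ii) `[[P, −(PB₁ + ZD₂₁)], [−(PB₁ + ZD₂₁)*, W]] ⪰ 0`, and (iii) `trace(W) ≤ γ²`,
then for the observer gain `L = P⁻¹Z` the error system
`Σ(T, A + L C₂, −(B₁ + L D₂₁), C₁)` has `H₂`-norm at most `γ`. -/
theorem pie_H2_optimal_estimator
    {H : Type*} [NormedAddCommGroup H] [InnerProductSpace ℝ H] [CompleteSpace H]
    (nw nz ny : ℕ) (T A : H →L[ℝ] H)
    (B₁ : EuclideanSpace ℝ (Fin nw) →L[ℝ] H)
    (C₁ : H →L[ℝ] EuclideanSpace ℝ (Fin nz))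
    (C₂ : H →L[ℝ] EuclideanSpace ℝ (Fin ny))
    (D₂₁ : EuclideanSpace ℝ (Fin nw) →L[ℝ] EuclideanSpace ℝ (Fin ny))
    (ε γ : ℝ) (hε : 0 < ε) (hγ : 0 < γ)
    (P : H →L[ℝ] H) (hPsa : IsSelfAdjoint P)
    (hPpos : ∀ x : H, ε * ‖x‖ ^ 2 ≤ ⟪x, P x⟫)
    (Z : EuclideanSpace ℝ (Fin ny) →L[ℝ] H)
    (W : EuclideanSpace ℝ (Fin nw) →L[ℝ] EuclideanSpace ℝ (Fin nw)) (hWsa : IsSelfAdjoint W)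
    (hLPI : ∀ x : H,
      2 * ⟪P (T x), A x⟫ + 2 * ⟪T x, Z (C₂ x)⟫ + ‖C₁ x‖ ^ 2 ≤ 0)
    (hblock : ∀ (x : H) (u : EuclideanSpace ℝ (Fin nw)),
      0 ≤ ⟪x, P x⟫ - 2 * ⟪x, P (B₁ u) + Z (D₂₁ u)⟫ + ⟪u, W u⟫)
    (htrace : LinearMap.trace ℝ (EuclideanSpace ℝ (Fin nw)) W.toLinearMap ≤ γ ^ 2) :
    ∀ L : EuclideanSpace ℝ (Fin ny) →L[ℝ] H, P ∘L L = Z →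
      ∀ (u₀ : EuclideanSpace ℝ (Fin nw)) (e e' : ℝ → H),
        (∀ t : ℝ, 0 ≤ t → HasDerivAt e (e' t) t) →
        (∀ t : ℝ, 0 ≤ t → T (e' t) = (A + L ∘L C₂) (e t)) →
        T (e 0) = -(B₁ u₀ + L (D₂₁ u₀)) →
        (∫ t in Set.Ioi (0 : ℝ), ‖C₁ (e t)‖ ^ 2) ≤ γ ^ 2 * ‖u₀‖ ^ 2 :=
  pie_H2_optimal_estimator_general nw nz ny T A B₁ C₁ C₂ D₂₁ γ P hPsa Z W hLPI hblock htrace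
end

section
/- Let H be a real Hilbert space, T, A : H → H bounded linear operators, ε > 0, and P : H → H a bounded self-adjoint operator with ⟨x, P x⟩ ≥ ε‖x‖² for all x ∈ H, such that 2⟨P T x, A x⟩ ≤ 0 for all x ∈ H (i.e., A*PT + T*PA ⪯ 0). Then every differentiable x : [0,∞) → H with T ẋ(t) = A x(t) for all t ≥ 0 satisfies: the function t ↦ ⟨T x(t), P T x(t)⟩ is nonincreasing on [0,∞), and consequently ε ‖T x(t)‖² ≤ ⟨T x(0), P T x(0)⟩ for all t ≥ 0. (The Lyapunov stability LPI for the PIE Σ(T,A).) -/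
open scoped RealInnerProductSpace

/-- **Lyapunov stability LPI for the PIE `Σ(T,A)`.** If `P ⪰ εI` is self-adjoint and
`A*PT + T*PA ⪯ 0` (as a quadratic form), then along every solution of `Σ(T,A)` the
Lyapunov function `t ↦ ⟪T x(t), P T x(t)⟫` is nonincreasing on `[0,∞)`, and consequently
`ε ‖T x(t)‖² ≤ ⟪T x(0), P T x(0)⟫` for all `t ≥ 0`. -/
theorem pie_lyapunov_stability
    {H : Type*} [NormedAddCommGroup H] [InnerProductSpace ℝ H] [CompleteSpace H]
    (T A : H →L[ℝ] H) (ε : ℝ) (hε : 0 < ε)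
    (P : H →L[ℝ] H) (hPsa : IsSelfAdjoint P)
    (hPpos : ∀ x : H, ε * ‖x‖ ^ 2 ≤ ⟪x, P x⟫)
    (hLPI : ∀ x : H, 2 * ⟪P (T x), A x⟫ ≤ 0) :
    ∀ (x x' : ℝ → H),
      (∀ t : ℝ, 0 ≤ t → HasDerivAt x (x' t) t) →
      (∀ t : ℝ, 0 ≤ t → T (x' t) = A (x t)) →
      AntitoneOn (fun t : ℝ => ⟪T (x t), P (T (x t))⟫) (Set.Ici (0 : ℝ)) ∧
        ∀ t : ℝ, 0 ≤ t → ε * ‖T (x t)‖ ^ 2 ≤ ⟪T (x 0), P (T (x 0))⟫ := by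
  intro x x' hx hTx'
  set V : ℝ → ℝ := fun t => ⟪T (x t), P (T (x t))⟫ with hVdef
  have hV : ∀ t : ℝ, 0 ≤ t → HasDerivAt V (2 * ⟪P (T (x t)), A (x t)⟫) t := by
    intro t ht
    have hf : HasDerivAt (fun s => T (x s)) (T (x' t)) t :=
      T.hasFDerivAt.comp_hasDerivAt t (hx t ht)
    have hg : HasDerivAt (fun s => P (T (x s))) (P (T (x' t))) t :=
      P.hasFDerivAt.comp_hasDerivAt t hf
    have h := hf.inner ℝ hg
    have hval : ⟪T (x t), P (T (x' t))⟫ + ⟪T (x' t), P (T (x t))⟫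
        = 2 * ⟪P (T (x t)), A (x t)⟫ := by
      have h1 : ⟪T (x t), P (T (x' t))⟫ = ⟪P (T (x t)), T (x' t)⟫ :=
        (hPsa.isSymmetric (T (x t)) (T (x' t))).symm
      have h2 : ⟪T (x' t), P (T (x t))⟫ = ⟪P (T (x t)), T (x' t)⟫ :=
        real_inner_comm _ _
      rw [h1, h2, hTx' t ht]; ring
    simpa [hVdef, hval] using h
  have hanti : AntitoneOn V (Set.Ici (0 : ℝ)) := by
    apply antitoneOn_of_deriv_nonpos (convex_Ici 0)
    · intro t ht
      exact (hV t ht).continuousAt.continuousWithinAt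
    · intro t ht
      rw [interior_Ici] at ht
      exact (hV t ht.le).differentiableAt.differentiableWithinAt
    · intro t ht
      rw [interior_Ici] at ht
      rw [(hV t ht.le).deriv]
      exact hLPI (x t)
  refine ⟨hanti, fun t ht => ?_⟩
  calc ε * ‖T (x t)‖ ^ 2 ≤ ⟪T (x t), P (T (x t))⟫ := hPpos _
    _ ≤ V 0 := hanti Set.self_mem_Ici ht ht
end
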